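/- Let n = 2 and μ = a_1 δ_{y_1} + a_2 δ_{y_2} with distinct y_1, y_2 ∈ I(2, Ω) and nonzero a_1, a_2 ∈ ℂ. Assume σ/m_min ≤ 1/8 and d_min = |y_1 − y_2| ≥ (3/Ω) · arcsin(2·(σ/m_min)^{1/3}). Let Y(ω) = F[μ](ω) + W(ω), ω ∈ [−Ω, Ω], with |W(ω)| < σ for all ω ∈ [−Ω, Ω]. If μ̂ = â_1 δ_{ŷ_1} + â_2 δ_{ŷ_2} with distinct ŷ_1, ŷ_2 ∈ I(2, Ω) is a σ-admissible measure of Y, then, after reordering ŷ_1, ŷ_2, one has |ŷ_1 − y_1| < d_min/2 and |ŷ_2 − y_2| < d_min/2. -/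

import Mathlib

/-!
Suppose no matching exists. Since the two intervals of radius `d_min/2` around `y₁, y₂` are
disjoint, some `y_j` is at distance `≥ d_min/2` from both `ŷ₁, ŷ₂`. The difference
`F[μ̂] - F[μ]` is a sum of four exponentials with sup norm `< 2σ` on `[-Ω, Ω]`, and `y_j` is
isolated among its nodes. Sampling it at `-Ω, -Ω/3, Ω/3, Ω` gives power sums in the
`z_t = exp(2iΩt/3)`, and the filter `(X - z₂)(X - z₃)(X - z₄)` (coefficients of total size `8`)
extracts `-a_j e^{-iΩy_j} (z_j - z₂)(z_j - z₃)(z_j - z₄)`, so this has norm `< 16σ`. The chord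
bound `|z_s - z_t| = 2|sin(Ω(s-t)/3)|` and the separation assumption bound it below by
`16 m_min (σ/m_min) = 16σ`, a contradiction.
-/

open Real
open Complex (I)

lemma sin_le_abs_sin {θ x : ℝ} (hθ : 0 ≤ θ) (hθx : θ ≤ |x|) (hx : |x| ≤ π / 2) :
    sin θ ≤ |sin x| := by
  rcases le_total 0 x with h | h
  · rw [abs_of_nonneg h] at hθx hx
    exact (sin_le_sin_of_le_of_le_pi_div_two (by linarith) hx hθx).trans (le_abs_self _)
  · rw [abs_of_nonpos h] at hθx hx
    calc sin θ ≤ sin (-x) := sin_le_sin_of_le_of_le_pi_div_two (by linarith) hx hθx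
      _ = -sin x := sin_neg x
      _ ≤ |sin x| := neg_le_abs _

lemma sin_le_two_mul_sin_half {θ : ℝ} (h₀ : 0 ≤ θ) (hπ : θ ≤ 2 * π) :
    sin θ ≤ 2 * sin (θ / 2) := by
  have hsin : 0 ≤ sin (θ / 2) := sin_nonneg_of_nonneg_of_le_pi (by linarith) (by linarith)
  calc sin θ = 2 * sin (θ / 2) * cos (θ / 2) := by
        rw [← sin_two_mul, mul_div_cancel₀ _ two_ne_zero]
    _ ≤ 2 * sin (θ / 2) * 1 := by gcongr; exact cos_le_one _
    _ = 2 * sin (θ / 2) := mul_one _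

lemma norm_exp_I_mul_sub_exp_I_mul (x y : ℝ) :
    ‖Complex.exp (I * x) - Complex.exp (I * y)‖ = 2 * |sin ((x - y) / 2)| := by
  have hfactor : Complex.exp (I * x) - Complex.exp (I * y)
      = Complex.exp (I * y) * (Complex.exp (I * ↑(x - y)) - 1) := by
    rw [mul_sub, mul_one, ← Complex.exp_add]; push_cast; ring_nf
  rw [hfactor, norm_mul, Complex.norm_exp_I_mul_ofReal, one_mul,
    Complex.norm_exp_I_mul_ofReal_sub_one, norm_mul, Real.norm_two, Real.norm_eq_abs]

lemma two_mul_sin_le_norm_exp_I_mul_sub {θ x y : ℝ} (hθ : 0 ≤ θ) (hθxy : θ ≤ |x - y| / 2)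
    (hxy : |x - y| / 2 ≤ π / 2) :
    2 * sin θ ≤ ‖Complex.exp (I * x) - Complex.exp (I * y)‖ := by
  rw [norm_exp_I_mul_sub_exp_I_mul]
  have habs : |(x - y) / 2| = |x - y| / 2 := by rw [abs_div, abs_two]
  gcongr
  exact sin_le_abs_sin hθ (habs ▸ hθxy) (habs ▸ hxy)

lemma exp_I_mul_add_nat_mul (t a h : ℝ) (k : ℕ) :
    Complex.exp (I * t * ↑(a + k * h))
      = Complex.exp (I * ↑(t * a)) * Complex.exp (I * ↑(t * h)) ^ k := by
  rw [← Complex.exp_nat_mul, ← Complex.exp_add]; push_cast; ring_nf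

-- The coefficients are those of `(X - z₂)(X - z₃)(X - z₄)`.
lemma annihilating_filter_eq {R : Type*} [CommRing R]
    (c₁ c₂ c₃ c₄ z₁ z₂ z₃ z₄ : R) (f : ℕ → R)
    (hf : ∀ k, f k = c₁ * z₁ ^ k + c₂ * z₂ ^ k + c₃ * z₃ ^ k + c₄ * z₄ ^ k) :
    c₁ * ((z₁ - z₂) * (z₁ - z₃) * (z₁ - z₄)) = f 3 - (z₂ + z₃ + z₄) * f 2
      + (z₂ * z₃ + z₂ * z₄ + z₃ * z₄) * f 1 - z₂ * z₃ * z₄ * f 0 := by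
  simp only [hf]; ring

lemma norm_mul_prod_sub_lt_of_norm_power_sum_lt {R : Type*} [NormedCommRing R] {ε : ℝ}
    (c₁ c₂ c₃ c₄ z₁ z₂ z₃ z₄ : R) (hz₂ : ‖z₂‖ ≤ 1) (hz₃ : ‖z₃‖ ≤ 1) (hz₄ : ‖z₄‖ ≤ 1)
    (f : ℕ → R)
    (hf : ∀ k, f k = c₁ * z₁ ^ k + c₂ * z₂ ^ k + c₃ * z₃ ^ k + c₄ * z₄ ^ k)
    (hε : ∀ k ≤ 3, ‖f k‖ < ε) :
    ‖c₁ * ((z₁ - z₂) * (z₁ - z₃) * (z₁ - z₄))‖ < 8 * ε := by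
  have hprod : ∀ {u v : R}, ‖u‖ ≤ 1 → ‖v‖ ≤ 1 → ‖u * v‖ ≤ 1 := fun hu hv =>
    (norm_mul_le_of_le hu hv).trans_eq (one_mul 1)
  have he₁ : ‖z₂ + z₃ + z₄‖ ≤ 3 := by linarith [norm_add₃_le (a := z₂) (b := z₃) (c := z₄)]
  have he₂ : ‖z₂ * z₃ + z₂ * z₄ + z₃ * z₄‖ ≤ 3 := by
    linarith [norm_add₃_le (a := z₂ * z₃) (b := z₂ * z₄) (c := z₃ * z₄),
      hprod hz₂ hz₃, hprod hz₂ hz₄, hprod hz₃ hz₄]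
  have he₃ : ‖z₂ * z₃ * z₄‖ ≤ 1 := hprod (hprod hz₂ hz₃) hz₄
  have h₀ := hε 0 (by norm_num)
  have h₁ := hε 1 (by norm_num)
  have h₂ := hε 2 (by norm_num)
  have h₃ := hε 3 le_rfl
  rw [annihilating_filter_eq c₁ c₂ c₃ c₄ z₁ z₂ z₃ z₄ f hf]
  have hm₁ := norm_mul_le_of_le he₁ (le_refl ‖f 2‖)
  have hm₂ := norm_mul_le_of_le he₂ (le_refl ‖f 1‖)
  have hm₃ := norm_mul_le_of_le he₃ (le_refl ‖f 0‖)
  have htri := norm_sub_le (f 3 - (z₂ + z₃ + z₄) * f 2 + (z₂ * z₃ + z₂ * z₄ + z₃ * z₄) * f 1)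
    (z₂ * z₃ * z₄ * f 0)
  have htri' := norm_add_le (f 3 - (z₂ + z₃ + z₄) * f 2) ((z₂ * z₃ + z₂ * z₄ + z₃ * z₄) * f 1)
  have htri'' := norm_sub_le (f 3) ((z₂ + z₃ + z₄) * f 2)
  linarith

lemma norm_mul_sin_pow_three_lt_of_norm_exp_sum_lt {Ω θ ε : ℝ} (hΩ : 0 < Ω) (hθ : 0 ≤ θ)
    {t₁ t₂ t₃ t₄ : ℝ} {c₁ c₂ c₃ c₄ : ℂ}
    (h₂ : θ ≤ Ω * |t₁ - t₂| / 3) (h₃ : θ / 2 ≤ Ω * |t₁ - t₃| / 3)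
    (h₄ : θ / 2 ≤ Ω * |t₁ - t₄| / 3) (hb₂ : Ω * |t₁ - t₂| / 3 ≤ π / 2)
    (hb₃ : Ω * |t₁ - t₃| / 3 ≤ π / 2) (hb₄ : Ω * |t₁ - t₄| / 3 ≤ π / 2)
    (hsmall : ∀ ω ∈ Set.Icc (-Ω) Ω,
      ‖c₁ * Complex.exp (I * t₁ * ω) + c₂ * Complex.exp (I * t₂ * ω)
        + c₃ * Complex.exp (I * t₃ * ω) + c₄ * Complex.exp (I * t₄ * ω)‖ < ε) :
    ‖c₁‖ * sin θ ^ 3 < 4 * ε := by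
  set z : ℝ → ℂ := fun t ↦ Complex.exp (I * ↑(t * (2 * Ω / 3)))
  set e : ℝ → ℂ := fun t ↦ Complex.exp (I * ↑(t * -Ω))
  have hz : ∀ t, ‖z t‖ ≤ 1 := fun t ↦ (Complex.norm_exp_I_mul_ofReal _).le
  have hchord : ∀ t, |t₁ * (2 * Ω / 3) - t * (2 * Ω / 3)| / 2 = Ω * |t₁ - t| / 3 := fun t ↦ by
    rw [← sub_mul, abs_mul, abs_of_pos (by positivity : 0 < 2 * Ω / 3)]; ring
  -- sampling at `ω = -Ω + k (2Ω/3)`, `k = 0, …, 3`, turns the exponential sum into a power sum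
  have hupper := norm_mul_prod_sub_lt_of_norm_power_sum_lt
    (c₁ * e t₁) (c₂ * e t₂) (c₃ * e t₃) (c₄ * e t₄) (z t₁) (z t₂) (z t₃) (z t₄)
    (hz t₂) (hz t₃) (hz t₄)
    (fun k : ℕ ↦ c₁ * Complex.exp (I * t₁ * ↑(-Ω + k * (2 * Ω / 3)))
      + c₂ * Complex.exp (I * t₂ * ↑(-Ω + k * (2 * Ω / 3)))
      + c₃ * Complex.exp (I * t₃ * ↑(-Ω + k * (2 * Ω / 3)))
      + c₄ * Complex.exp (I * t₄ * ↑(-Ω + k * (2 * Ω / 3))))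
    (fun k ↦ by simp only [exp_I_mul_add_nat_mul, z, e]; ring)
    (fun k hk ↦ hsmall _ ⟨le_add_of_nonneg_right (by positivity), by
      have : (k : ℝ) ≤ 3 := by exact_mod_cast hk
      nlinarith⟩)
  have hsinθ : 0 ≤ sin θ := sin_nonneg_of_nonneg_of_le_pi hθ (by linarith [pi_pos])
  have hhalf : sin θ ≤ 2 * sin (θ / 2) := sin_le_two_mul_sin_half hθ (by linarith [pi_pos])
  have hz₂ : 2 * sin θ ≤ ‖z t₁ - z t₂‖ :=
    two_mul_sin_le_norm_exp_I_mul_sub hθ (by rwa [hchord]) (by rwa [hchord])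
  have hz₃ : sin θ ≤ ‖z t₁ - z t₃‖ := hhalf.trans <|
    two_mul_sin_le_norm_exp_I_mul_sub (by linarith) (by rwa [hchord]) (by rwa [hchord])
  have hz₄ : sin θ ≤ ‖z t₁ - z t₄‖ := hhalf.trans <|
    two_mul_sin_le_norm_exp_I_mul_sub (by linarith) (by rwa [hchord]) (by rwa [hchord])
  have he : ‖e t₁‖ = 1 := Complex.norm_exp_I_mul_ofReal _
  have hlower : ‖c₁‖ * (2 * sin θ * sin θ * sin θ)
      ≤ ‖c₁ * e t₁ * ((z t₁ - z t₂) * (z t₁ - z t₃) * (z t₁ - z t₄))‖ := by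
    rw [norm_mul, norm_mul, he, mul_one, norm_mul, norm_mul]
    gcongr
  linarith

lemma sin_arcsin_two_mul_rpow_one_div_three_pow_three {x : ℝ} (h₀ : 0 ≤ x) (h : x ≤ 1 / 8) :
    sin (arcsin (2 * x ^ (1 / 3 : ℝ))) ^ 3 = 8 * x := by
  have hr₀ : 0 ≤ x ^ (1 / 3 : ℝ) := by positivity
  have hr₃ : (x ^ (1 / 3 : ℝ)) ^ 3 = x := by
    rw [one_div, ← Nat.cast_ofNat, rpow_inv_natCast_pow h₀ three_ne_zero]
  have hr : x ^ (1 / 3 : ℝ) ≤ 1 / 2 := by nlinarith [sq_nonneg (x ^ (1 / 3 : ℝ))]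
  rw [sin_arcsin (by linarith) (by linarith), mul_pow, hr₃]
  norm_num

lemma mul_abs_sub_div_three_le_pi_div_two {Ω a b : ℝ} (hΩ : 0 < Ω)
    (ha : a ∈ Set.Ioo (-(π / (2 * Ω))) (π / (2 * Ω)))
    (hb : b ∈ Set.Ioo (-(π / (2 * Ω))) (π / (2 * Ω))) :
    Ω * |a - b| / 3 ≤ π / 2 := by
  have hab : |a - b| < π / Ω := by
    rw [abs_sub_lt_iff, ← add_halves (π / Ω), div_div, mul_comm Ω]
    constructor <;> linarith [ha.1, ha.2, hb.1, hb.2]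
  have := (lt_div_iff₀' hΩ).1 hab
  linarith [pi_pos]

lemma far_of_not_matched {y₁ y₂ x₁ x₂ d : ℝ} (hd : d ≤ |y₁ - y₂|)
    (h : ¬((|x₁ - y₁| < d / 2 ∧ |x₂ - y₂| < d / 2) ∨ (|x₂ - y₁| < d / 2 ∧ |x₁ - y₂| < d / 2))) :
    (d / 2 ≤ |x₁ - y₁| ∧ d / 2 ≤ |x₂ - y₁|) ∨ (d / 2 ≤ |x₁ - y₂| ∧ d / 2 ≤ |x₂ - y₂|) := by
  have hsep : ∀ x, d / 2 ≤ |x - y₁| ∨ d / 2 ≤ |x - y₂| := fun x ↦ by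
    by_contra! hx
    linarith [abs_sub_le y₁ x y₂, abs_sub_comm y₁ x]
  grind [hsep x₁, hsep x₂]

lemma norm_lt_of_norm_exp_sum_lt {Ω σ m d : ℝ} (hΩ : 0 < Ω) (hσ : 0 ≤ σ) (hm : 0 < m)
    (hratio : σ / m ≤ 1 / 8) (hsep : 3 / Ω * arcsin (2 * (σ / m) ^ (1 / 3 : ℝ)) ≤ d)
    {t₁ t₂ t₃ t₄ : ℝ} {c₁ c₂ c₃ c₄ : ℂ}
    (ht₁ : t₁ ∈ Set.Ioo (-(π / (2 * Ω))) (π / (2 * Ω)))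
    (ht₂ : t₂ ∈ Set.Ioo (-(π / (2 * Ω))) (π / (2 * Ω)))
    (ht₃ : t₃ ∈ Set.Ioo (-(π / (2 * Ω))) (π / (2 * Ω)))
    (ht₄ : t₄ ∈ Set.Ioo (-(π / (2 * Ω))) (π / (2 * Ω)))
    (h₂ : d ≤ |t₁ - t₂|) (h₃ : d / 2 ≤ |t₁ - t₃|) (h₄ : d / 2 ≤ |t₁ - t₄|)
    (hsmall : ∀ ω ∈ Set.Icc (-Ω) Ω,
      ‖c₁ * Complex.exp (I * t₁ * ω) + c₂ * Complex.exp (I * t₂ * ω)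
        + c₃ * Complex.exp (I * t₃ * ω) + c₄ * Complex.exp (I * t₄ * ω)‖ < 2 * σ) :
    ‖c₁‖ < m := by
  set θ := arcsin (2 * (σ / m) ^ (1 / 3 : ℝ))
  have hθ : 0 ≤ θ := arcsin_nonneg.2 (by positivity)
  have hθd : θ ≤ Ω * d / 3 := by
    rw [div_mul_eq_mul_div, div_le_iff₀ hΩ] at hsep; linarith
  have hsin : m * sin θ ^ 3 = 8 * σ := by
    rw [sin_arcsin_two_mul_rpow_one_div_three_pow_three (by positivity) hratio]
    field_simp
  have hbound := norm_mul_sin_pow_three_lt_of_norm_exp_sum_lt hΩ hθ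
    (hθd.trans (by gcongr)) (by linarith [mul_le_mul_of_nonneg_left h₃ hΩ.le])
    (by linarith [mul_le_mul_of_nonneg_left h₄ hΩ.le])
    (mul_abs_sub_div_three_le_pi_div_two hΩ ht₁ ht₂)
    (mul_abs_sub_div_three_le_pi_div_two hΩ ht₁ ht₃)
    (mul_abs_sub_div_three_le_pi_div_two hΩ ht₁ ht₄) hsmall
  have hsin₀ : 0 ≤ sin θ ^ 3 := by nlinarith
  by_contra! hc
  linarith [mul_le_mul_of_nonneg_right hc hsin₀]

theorem location_recovery_stability_two_points
    (Ω σ : ℝ) (hΩ : 0 < Ω) (hσ : 0 < σ)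
    (y₁ y₂ : ℝ)
    (a₁ a₂ : ℂ) (ha₁ : a₁ ≠ 0) (ha₂ : a₂ ≠ 0)
    (hloc₁ : y₁ ∈ Set.Ioo (-(Real.pi / (2 * Ω))) (Real.pi / (2 * Ω)))
    (hloc₂ : y₂ ∈ Set.Ioo (-(Real.pi / (2 * Ω))) (Real.pi / (2 * Ω)))
    (mmin : ℝ) (hmmin : mmin = min (Norm.norm a₁) (Norm.norm a₂))
    (hratio : σ / mmin ≤ 1 / 8)
    (dmin : ℝ) (hdmin : dmin = |y₁ - y₂|)
    (hsep : 3 / Ω * Real.arcsin (2 * (σ / mmin) ^ ((1 : ℝ) / 3)) ≤ dmin)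
    (W : ℝ → ℂ) (hW : ∀ ω ∈ Set.Icc (-Ω) Ω, Norm.norm (W ω) < σ)
    (yh₁ yh₂ : ℝ) (ah₁ ah₂ : ℂ)
    (hloch₁ : yh₁ ∈ Set.Ioo (-(Real.pi / (2 * Ω))) (Real.pi / (2 * Ω)))
    (hloch₂ : yh₂ ∈ Set.Ioo (-(Real.pi / (2 * Ω))) (Real.pi / (2 * Ω)))
    (hadm : ∀ ω ∈ Set.Icc (-Ω) Ω,
      Norm.norm
        (ah₁ * Complex.exp (Complex.I * (yh₁ : ℂ) * (ω : ℂ))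
          + ah₂ * Complex.exp (Complex.I * (yh₂ : ℂ) * (ω : ℂ))
          - (a₁ * Complex.exp (Complex.I * (y₁ : ℂ) * (ω : ℂ))
            + a₂ * Complex.exp (Complex.I * (y₂ : ℂ) * (ω : ℂ)) + W ω)) < σ) :
    (|yh₁ - y₁| < dmin / 2 ∧ |yh₂ - y₂| < dmin / 2) ∨
    (|yh₂ - y₁| < dmin / 2 ∧ |yh₁ - y₂| < dmin / 2) := by
  have hm : 0 < mmin := hmmin ▸ lt_min (norm_pos_iff.2 ha₁) (norm_pos_iff.2 ha₂)
  have hdiff : ∀ ω ∈ Set.Icc (-Ω) Ω,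
      ‖ah₁ * Complex.exp (I * yh₁ * ω) + ah₂ * Complex.exp (I * yh₂ * ω)
        - (a₁ * Complex.exp (I * y₁ * ω) + a₂ * Complex.exp (I * y₂ * ω))‖ < 2 * σ :=
    fun ω hω ↦ by
      have h := (norm_add_le _ (W ω)).trans_lt (add_lt_add (hadm ω hω) (hW ω hω))
      rwa [sub_add_eq_sub_sub, sub_add_cancel, ← two_mul] at h
  by_contra hmatch
  rcases far_of_not_matched hdmin.le hmatch with ⟨h₁, h₂⟩ | ⟨h₁, h₂⟩
  · refine (hmmin ▸ min_le_left _ _ : mmin ≤ ‖a₁‖).not_gt ?_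
    simpa only [norm_neg] using norm_lt_of_norm_exp_sum_lt
      (c₁ := -a₁) (c₂ := -a₂) (c₃ := ah₁) (c₄ := ah₂) hΩ hσ.le hm hratio hsep
      hloc₁ hloc₂ hloch₁ hloch₂ hdmin.le (abs_sub_comm yh₁ y₁ ▸ h₁) (abs_sub_comm yh₂ y₁ ▸ h₂)
      (fun ω hω ↦ by convert hdiff ω hω using 2; ring)
  · refine (hmmin ▸ min_le_right _ _ : mmin ≤ ‖a₂‖).not_gt ?_
    simpa only [norm_neg] using norm_lt_of_norm_exp_sum_lt
      (c₁ := -a₂) (c₂ := -a₁) (c₃ := ah₁) (c₄ := ah₂) hΩ hσ.le hm hratio hsep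
      hloc₂ hloc₁ hloch₁ hloch₂ (abs_sub_comm y₁ y₂ ▸ hdmin.le)
      (abs_sub_comm yh₁ y₂ ▸ h₁) (abs_sub_comm yh₂ y₂ ▸ h₂)
      (fun ω hω ↦ by convert hdiff ω hω using 2; ring)
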